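/- Let G be a topological group acting continuously on a topological space X and H ≤ G a subgroup. The continuous map G × X_H → X_{(H)}, (g, x) ↦ g • x, induces a well-defined continuous bijection from the quotient G ×_{N(H)} X_H (orbit space of the twisted action h•(g,x) = (gh, h⁻¹•x) of the normalizer N(H)) onto the (H)-orbit type set X_{(H)} = {x ∈ X | G_x is conjugate to H}. -/

import Mathlib

/-!
If `g • x = g' • x'` with `G_x = G_{x'} = H`, then `g⁻¹ * g'` carries `x'` to `x`, so conjugation by
it maps `G_{x'} = H` onto `G_x = H`, i.e. it lies in `N(H)`: this is exactly the twisted relation,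
which gives injectivity. Surjectivity onto `X_{(H)}` is `G_{g⁻¹ • y} = g⁻¹ G_y g`.
-/

open MulAction Subgroup

theorem Quot.lift_injective {α β : Sort*} {r : α → α → Prop} {f : α → β}
    (hf : ∀ a b, r a b → f a = f b) (hr : ∀ a b, f a = f b → r a b) :
    Function.Injective (Quot.lift f hf) := by
  rintro ⟨a⟩ ⟨b⟩ hab
  exact Quot.sound (hr a b hab)

section

variable {G X : Type*} [Group G] [MulAction G X] {H : Subgroup G}

theorem MulAction.stabilizer_smul_eq_iff_mem_normalizer {x : X} (hx : stabilizer G x = H)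
    (a : G) : stabilizer G (a • x) = H ↔ a ∈ normalizer (H : Set G) := by
  rw [stabilizer_smul_eq_stabilizer_map_conj, hx, mem_normalizer_iff_map_conj_eq]
  rfl

theorem MulAction.stabilizer_inv_smul_eq_of_eq_map_conj {y : X} {g : G}
    (hy : stabilizer G y = H.map (MulAut.conj g).toMonoidHom) :
    stabilizer G (g⁻¹ • y) = H := by
  rw [stabilizer_smul_eq_stabilizer_map_conj, hy, map_map]
  convert H.map_id
  ext
  simp [mul_assoc]

variable (H) in
def twistedRel (p p' : G × {x : X // stabilizer G x = H}) : Prop :=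
  ∃ h ∈ normalizer (H : Set G), p'.1 = p.1 * h ∧ (p'.2 : X) = h⁻¹ • (p.2 : X)

theorem twistedRel.smul_eq {p p' : G × {x : X // stabilizer G x = H}}
    (hpp' : twistedRel H p p') : p.1 • (p.2 : X) = p'.1 • (p'.2 : X) := by
  obtain ⟨h, -, hg, hx⟩ := hpp'
  rw [hg, hx, mul_smul, smul_inv_smul]

theorem twistedRel_of_smul_eq {p p' : G × {x : X // stabilizer G x = H}}
    (hpp' : p.1 • (p.2 : X) = p'.1 • (p'.2 : X)) : twistedRel H p p' := by
  obtain ⟨g, x, hx⟩ := p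
  obtain ⟨g', x', hx'⟩ := p'
  have hx'_eq : x' = (g⁻¹ * g')⁻¹ • x := by
    rw [mul_inv_rev, inv_inv, mul_smul, eq_inv_smul_iff, hpp']
  refine ⟨g⁻¹ * g', ?_, by group, hx'_eq⟩
  rw [← inv_mem_iff, ← stabilizer_smul_eq_iff_mem_normalizer hx, ← hx'_eq, hx']

theorem range_smul_stabilizer_eq :
    Set.range (fun p : G × {x : X // stabilizer G x = H} ↦ p.1 • (p.2 : X)) =
      {y | ∃ g : G, stabilizer G y = H.map (MulAut.conj g).toMonoidHom} := by
  ext y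
  constructor
  · rintro ⟨⟨g, x, hx⟩, rfl⟩
    exact ⟨g, by rw [stabilizer_smul_eq_stabilizer_map_conj, hx]⟩
  · rintro ⟨g, hg⟩
    exact ⟨(g, ⟨g⁻¹ • y, stabilizer_inv_smul_eq_of_eq_map_conj hg⟩), smul_inv_smul g y⟩

theorem continuous_twistedRel_lift_smul [TopologicalSpace G] [TopologicalSpace X]
    [ContinuousSMul G X] :
    Continuous (Quot.lift (fun p : G × {x : X // stabilizer G x = H} ↦ p.1 • (p.2 : X))
      fun _ _ ↦ twistedRel.smul_eq) :=
  continuous_quot_lift _ (by fun_prop)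

end

theorem twisted_quotient_bijects_onto_orbit_type_general
    (G X : Type*) [Group G] [TopologicalSpace G]
    [TopologicalSpace X] [MulAction G X] [ContinuousSMul G X] (H : Subgroup G) :
    ∃ F : Quot (fun (p p' : G × {x : X // MulAction.stabilizer G x = H}) =>
        ∃ h ∈ Subgroup.normalizer (H : Set G), p'.1 = p.1 * h ∧ (p'.2 : X) = h⁻¹ • (p.2 : X)) → X,
      (∀ (g : G) (x : {x : X // MulAction.stabilizer G x = H}),
        F (Quot.mk _ (g, x)) = g • (x : X)) ∧
      Continuous F ∧ Function.Injective F ∧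
      Set.range F =
        {x : X | ∃ g : G,
          MulAction.stabilizer G x = Subgroup.map (MulAut.conj g).toMonoidHom H} :=
  ⟨_, fun _ _ ↦ rfl, continuous_twistedRel_lift_smul,
    Quot.lift_injective _ fun _ _ ↦ twistedRel_of_smul_eq,
    (Set.range_quot_lift _).trans range_smul_stabilizer_eq⟩

/-- The map `(g, x) ↦ g • x` induces a continuous bijection from the twisted quotient
`G ×_{N(H)} X_H` onto the orbit type set `X_{(H)}`. -/
theorem twisted_quotient_bijects_onto_orbit_type
    (G X : Type*) [Group G] [TopologicalSpace G] [IsTopologicalGroup G]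
    [TopologicalSpace X] [MulAction G X] [ContinuousSMul G X] (H : Subgroup G) :
    ∃ F : Quot (fun (p p' : G × {x : X // MulAction.stabilizer G x = H}) =>
        ∃ h ∈ Subgroup.normalizer (H : Set G), p'.1 = p.1 * h ∧ (p'.2 : X) = h⁻¹ • (p.2 : X)) → X,
      (∀ (g : G) (x : {x : X // MulAction.stabilizer G x = H}),
        F (Quot.mk _ (g, x)) = g • (x : X)) ∧
      Continuous F ∧ Function.Injective F ∧
      Set.range F =
        {x : X | ∃ g : G,
          MulAction.stabilizer G x = Subgroup.map (MulAut.conj g).toMonoidHom H} :=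
  twisted_quotient_bijects_onto_orbit_type_general G X H
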